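/- (Theorem 3.7) Let α : ℝ → ℝ³ be a unit-speed spacelike Frenet curve with timelike binormal, with frame (T, N, B) and curvatures κ, τ, and assume τ(s) ≠ 0 for all s. Let ν ∈ ℝ and define β(s) = α(s) + (ν − s)·(T(s) − (κ(s)/τ(s))·B(s)). Then β′(s) = (κ(s)/τ(s) − (ν − s)·(κ/τ)′(s))·B(s) for all s. Moreover, assuming this coefficient is nonvanishing, β is a timelike curve, and there exists a fixed nonzero vector d ∈ ℝ³ such that s ↦ η(β′(s)/‖β′(s)‖, d) is constant if and only if there exists a fixed nonzero vector d ∈ ℝ³ such that s ↦ η(T(s), d) is constant; that is, β is a timelike general helix if and only if α is a spacelike general helix. -/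

import Mathlib

noncomputable section

/-- Lorentzian inner product on Minkowski 3-space. -/
def eta (u v : Fin 3 → ℝ) : ℝ := -(u 0 * v 0) + u 1 * v 1 + u 2 * v 2

/-- Lorentzian norm. -/
def lnorm (u : Fin 3 → ℝ) : ℝ := Real.sqrt |eta u u|

lemma eta_smul_left (a : ℝ) (u v : Fin 3 → ℝ) : eta (a • u) v = a * eta u v := by
  simp [eta]; ring

lemma eta_smul_smul (a b : ℝ) (u v : Fin 3 → ℝ) :
    eta (a • u) (b • v) = a * b * eta u v := by
  simp [eta]; ring

lemma hasDerivAt_eta (F : ℝ → Fin 3 → ℝ) (F' : Fin 3 → ℝ) (d : Fin 3 → ℝ) (s : ℝ)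
    (h : HasDerivAt F F' s) : HasDerivAt (fun u => eta (F u) d) (eta F' d) s := by
  have h0 := (hasDerivAt_pi.mp h) 0
  have h1 := (hasDerivAt_pi.mp h) 1
  have h2 := (hasDerivAt_pi.mp h) 2
  have := ((h0.mul_const (d 0)).neg.add (h1.mul_const (d 1))).add (h2.mul_const (d 2))
  simp only [eta]
  exact this

lemma sign_const (g : ℝ → ℝ) (hgc : Continuous g) (hg0 : ∀ s, g s ≠ 0) :
    (∀ s, 0 < g s) ∨ (∀ s, g s < 0) := by
  rcases lt_or_gt_of_ne (hg0 0) with h | h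
  · right
    intro s
    rcases lt_or_gt_of_ne (hg0 s) with h' | h'
    · exact h'
    · exfalso
      obtain ⟨x, _, hx⟩ := intermediate_value_uIcc (a := (0:ℝ)) (b := s)
        hgc.continuousOn (Set.mem_uIcc.mpr (Or.inl ⟨le_of_lt h, le_of_lt h'⟩))
      exact hg0 x hx
  · left
    intro s
    rcases lt_or_gt_of_ne (hg0 s) with h' | h'
    · exfalso
      obtain ⟨x, _, hx⟩ := intermediate_value_uIcc (a := (0:ℝ)) (b := s)
        hgc.continuousOn (Set.mem_uIcc.mpr (Or.inr ⟨le_of_lt h', le_of_lt h⟩))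
      exact hg0 x hx
    · exact h'

theorem stmt6
    (α T N B : ℝ → Fin 3 → ℝ) (κ τ : ℝ → ℝ)
    (hαC : ContDiff ℝ (⊤ : ℕ∞) α) (hTC : ContDiff ℝ (⊤ : ℕ∞) T) (hNC : ContDiff ℝ (⊤ : ℕ∞) N)
    (hBC : ContDiff ℝ (⊤ : ℕ∞) B) (hκC : ContDiff ℝ (⊤ : ℕ∞) κ) (hτC : ContDiff ℝ (⊤ : ℕ∞) τ)
    (hT : ∀ s, deriv α s = T s)
    (hTT : ∀ s, eta (T s) (T s) = 1)
    (hNN : ∀ s, eta (N s) (N s) = 1)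
    (hBB : ∀ s, eta (B s) (B s) = -1)
    (hTN : ∀ s, eta (T s) (N s) = 0)
    (hTB : ∀ s, eta (T s) (B s) = 0)
    (hNB : ∀ s, eta (N s) (B s) = 0)
    (hκ : ∀ s, 0 < κ s)
    (hFr1 : ∀ s, deriv T s = κ s • N s)
    (hFr2 : ∀ s, deriv N s = (-κ s) • T s + τ s • B s)
    (hFr3 : ∀ s, deriv B s = τ s • N s)
    (hτ : ∀ s, τ s ≠ 0) (ν : ℝ)
    (g : ℝ → ℝ)
    (hg : ∀ s, g s = κ s / τ s - (ν - s) * deriv (fun u => κ u / τ u) s)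
    (β : ℝ → Fin 3 → ℝ)
    (hβ : ∀ s, β s = α s + (ν - s) • (T s - (κ s / τ s) • B s)) :
    (∀ s, deriv β s = g s • B s) ∧
    ((∀ s, g s ≠ 0) →
      ((∀ s, eta (deriv β s) (deriv β s) < 0) ∧
       ((∃ d : Fin 3 → ℝ, d ≠ 0 ∧ ∃ c : ℝ, ∀ s, eta ((lnorm (deriv β s))⁻¹ • deriv β s) d = c) ↔ (∃ d : Fin 3 → ℝ, d ≠ 0 ∧ ∃ c : ℝ, ∀ s, eta (T s) d = c)))) := by
  -- basic HasDerivAt facts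
  have hαd : ∀ s, HasDerivAt α (T s) s := fun s => by
    have := (hαC.differentiable (by simp) s).hasDerivAt
    rwa [hT s] at this
  have hTd : ∀ s, HasDerivAt T (κ s • N s) s := fun s => by
    have := (hTC.differentiable (by simp) s).hasDerivAt
    rwa [hFr1 s] at this
  have hBd : ∀ s, HasDerivAt B (τ s • N s) s := fun s => by
    have := (hBC.differentiable (by simp) s).hasDerivAt
    rwa [hFr3 s] at this
  have hfC : ContDiff ℝ (⊤ : ℕ∞) (fun u => κ u / τ u) := hκC.div hτC hτ
  have hfd : ∀ s, HasDerivAt (fun u => κ u / τ u) (deriv (fun u => κ u / τ u) s) s :=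
    fun s => (hfC.differentiable (by simp) s).hasDerivAt
  -- the derivative of β
  have hβd : ∀ s, HasDerivAt β (g s • B s) s := by
    intro s
    have hG : HasDerivAt (fun u => T u - (κ u / τ u) • B u)
        (κ s • N s - ((κ s / τ s) • (τ s • N s) + deriv (fun u => κ u / τ u) s • B s)) s :=
      (hTd s).sub ((hfd s).smul (hBd s))
    have hν : HasDerivAt (fun u => ν - u) (-1) s := (hasDerivAt_id s).const_sub ν
    have hsm := hν.smul hG
    have htot : HasDerivAt (fun u => α u + (ν - u) • (T u - (κ u / τ u) • B u)) _ s :=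
      (hαd s).add hsm
    have hβe : β = fun u => α u + (ν - u) • (T u - (κ u / τ u) • B u) := funext hβ
    rw [← hβe] at htot
    convert htot using 1
    funext i
    have hτs := hτ s
    simp only [Pi.add_apply, Pi.sub_apply, Pi.smul_apply, smul_eq_mul, neg_smul, one_smul,
      Pi.neg_apply, hg s]
    field_simp
    ring
  have hβ' : ∀ s, deriv β s = g s • B s := fun s => (hβd s).deriv
  refine ⟨hβ', fun hg0 => ?_⟩
  have hβη : ∀ s, eta (deriv β s) (deriv β s) = -(g s ^ 2) := by
    intro s
    rw [hβ' s, eta_smul_smul, hBB s]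
    ring
  have htl : ∀ s, eta (deriv β s) (deriv β s) < 0 := by
    intro s
    rw [hβη s]
    have h2 : 0 < g s ^ 2 := lt_of_le_of_ne (sq_nonneg _) (Ne.symm (pow_ne_zero 2 (hg0 s)))
    linarith
  refine ⟨htl, ?_⟩
  -- lnorm of the derivative
  have hln : ∀ s, lnorm (deriv β s) = |g s| := by
    intro s
    rw [lnorm, hβη s, abs_neg, abs_sq, Real.sqrt_sq_eq_abs]
  -- eta with constant vector derivative computations
  have hetaT : ∀ (d : Fin 3 → ℝ) s,
      HasDerivAt (fun u => eta (T u) d) (κ s * eta (N s) d) s := fun d s => by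
    have := hasDerivAt_eta T (κ s • N s) d s (hTd s)
    rwa [eta_smul_left] at this
  have hetaB : ∀ (d : Fin 3 → ℝ) s,
      HasDerivAt (fun u => eta (B u) d) (τ s * eta (N s) d) s := fun d s => by
    have := hasDerivAt_eta B (τ s • N s) d s (hBd s)
    rwa [eta_smul_left] at this
  -- transfer of constancy: T ↔ B
  have hTtoB : ∀ (d : Fin 3 → ℝ) (c : ℝ), (∀ s, eta (T s) d = c) →
      ∀ s, eta (B s) d = eta (B 0) d := by
    intro d c hc
    have hN0 : ∀ s, eta (N s) d = 0 := by
      intro s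
      have h1 := hetaT d s
      have h2 : HasDerivAt (fun u => eta (T u) d) 0 s := by
        have he : (fun u => eta (T u) d) = fun _ => c := funext hc
        rw [he]; exact hasDerivAt_const s c
      have := h1.unique h2
      exact (mul_eq_zero.mp this).resolve_left (ne_of_gt (hκ s))
    intro s
    exact is_const_of_deriv_eq_zero (fun x => (hetaB d x).differentiableAt)
      (fun x => by rw [(hetaB d x).deriv, hN0, mul_zero]) s 0
  have hBtoT : ∀ (d : Fin 3 → ℝ) (c : ℝ), (∀ s, eta (B s) d = c) →
      ∀ s, eta (T s) d = eta (T 0) d := by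
    intro d c hc
    have hN0 : ∀ s, eta (N s) d = 0 := by
      intro s
      have h1 := hetaB d s
      have h2 : HasDerivAt (fun u => eta (B u) d) 0 s := by
        have he : (fun u => eta (B u) d) = fun _ => c := funext hc
        rw [he]; exact hasDerivAt_const s c
      have := h1.unique h2
      exact (mul_eq_zero.mp this).resolve_left (hτ s)
    intro s
    exact is_const_of_deriv_eq_zero (fun x => (hetaT d x).differentiableAt)
      (fun x => by rw [(hetaT d x).deriv, hN0, mul_zero]) s 0
  -- sign of g is constant
  have hgc : Continuous g := by
    have : g = fun s => κ s / τ s - (ν - s) * deriv (fun u => κ u / τ u) s := funext hg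
    rw [this]
    exact ((hκC.continuous.div hτC.continuous hτ)).sub
      ((continuous_const.sub continuous_id).mul (hfC.continuous_deriv (by simp)))
  have hsgn := sign_const g hgc hg0
  -- normalized tangent of β : |g|⁻¹ * g = ±1
  obtain ⟨ε, hε, hεg⟩ : ∃ ε : ℝ, ε ≠ 0 ∧ ∀ s, |g s|⁻¹ * g s = ε := by
    rcases hsgn with h | h
    · exact ⟨1, one_ne_zero, fun s => by rw [abs_of_pos (h s), inv_mul_cancel₀ (hg0 s)]⟩
    · refine ⟨-1, by norm_num, fun s => ?_⟩
      rw [abs_of_neg (h s), ← neg_inv, neg_mul, inv_mul_cancel₀ (hg0 s)]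
  have hnorm : ∀ (d : Fin 3 → ℝ) s,
      eta ((lnorm (deriv β s))⁻¹ • deriv β s) d = ε * eta (B s) d := by
    intro d s
    rw [hln s, hβ' s, smul_smul, eta_smul_left, hεg s]
  constructor
  · rintro ⟨d, hd, c, hc⟩
    refine ⟨d, hd, eta (T 0) d, ?_⟩
    have hBc : ∀ s, eta (B s) d = ε⁻¹ * c := by
      intro s
      have := hc s
      rw [hnorm d s] at this
      field_simp at this ⊢
      linarith [this]
    exact hBtoT d (ε⁻¹ * c) hBc
  · rintro ⟨d, hd, c, hc⟩
    refine ⟨d, hd, ε * eta (B 0) d, ?_⟩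
    intro s
    rw [hnorm d s, hTtoB d c hc s]
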